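/- arXiv:0704.2680 — 2 statements merged into one kernel-verified Lean document; each statement's English description precedes it below -/
import Mathlib

section
/- Let μ₁, μ₂ ∈ ℝ and σ₁², σ₂² > 0. The Kullback–Leibler divergence between the Gaussian distributions N(μ₁, σ₁²) and N(μ₂, σ₂²) equals (1/2)·log(σ₂²/σ₁²) + (1/2)·(σ₁²/σ₂² − 1) + (μ₁−μ₂)²/(2σ₂²). -/
/-!
Both Gaussians have positive densities `p₁, p₂` with respect to Lebesgue measure, so
`log (dP/dQ) = log p₁ - log p₂` holds `P`-a.e. Each `log pᵢ` is a quadratic polynomial in `x`,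
so its integral against `N(μ₁, v₁)` only involves the mean and variance of `N(μ₁, v₁)`.
-/

open MeasureTheory ProbabilityTheory
open scoped ENNReal NNReal

/- Kullback–Leibler divergence `D(P‖Q) = ∫ log (dP/dQ) dP`, infinite if `P` is not
absolutely continuous w.r.t. `Q` or if the log-likelihood ratio is not integrable. -/
open Classical in
noncomputable def klDiv {X : Type*} [MeasurableSpace X] (P Q : Measure X) : ℝ≥0∞ :=
  if P ≪ Q ∧ Integrable (fun x => Real.log ((P.rnDeriv Q x).toReal)) P
  then ENNReal.ofReal (∫ x, Real.log ((P.rnDeriv Q x).toReal) ∂P)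
  else ⊤

open Real

lemma klDiv_eq_ofReal_integral {X : Type*} [MeasurableSpace X] {P Q : Measure X} {F : X → ℝ}
    (hPQ : P ≪ Q) (hF : llr P Q =ᵐ[P] F) (hF_int : Integrable F P) :
    klDiv P Q = ENNReal.ofReal (∫ x, F x ∂P) := by
  rw [klDiv, if_pos ⟨hPQ, hF_int.congr hF.symm⟩]
  exact congrArg ENNReal.ofReal (integral_congr_ae hF)

lemma llr_ae_eq_sub_of_absolutelyContinuous {X : Type*} [MeasurableSpace X] {P Q ξ : Measure X}
    [SigmaFinite P] [SigmaFinite Q] [SigmaFinite ξ] (hPQ : P ≪ Q) (hP : P ≪ ξ) (hQ : Q ≪ ξ) :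
    llr P Q =ᵐ[P] fun x ↦ log (P.rnDeriv ξ x).toReal - log (Q.rnDeriv ξ x).toReal := by
  filter_upwards [hPQ.ae_le (Measure.rnDeriv_eq_div hP hQ), Measure.rnDeriv_pos hP,
    hP.ae_le (Measure.rnDeriv_ne_top P ξ), hPQ.ae_le (Measure.rnDeriv_pos hQ),
    hP.ae_le (Measure.rnDeriv_ne_top Q ξ)] with x hdiv hP_pos hP_top hQ_pos hQ_top
  rw [llr, hdiv, ENNReal.toReal_div,
    log_div (ENNReal.toReal_pos hP_pos.ne' hP_top).ne' (ENNReal.toReal_pos hQ_pos.ne' hQ_top).ne']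

lemma log_gaussianPDFReal (μ : ℝ) {v : ℝ≥0} (hv : v ≠ 0) (x : ℝ) :
    log (gaussianPDFReal μ v x) = -log (2 * π * v) / 2 - (x - μ) ^ 2 / (2 * v) := by
  have hv' : (0 : ℝ) < v := by positivity
  rw [gaussianPDFReal_def, log_mul (by positivity) (exp_ne_zero _), log_inv, log_exp,
    log_sqrt (by positivity)]
  ring

lemma llr_gaussianReal {μ₁ μ₂ : ℝ} {v₁ v₂ : ℝ≥0} (hv₁ : v₁ ≠ 0) (hv₂ : v₂ ≠ 0) :
    llr (gaussianReal μ₁ v₁) (gaussianReal μ₂ v₂) =ᵐ[gaussianReal μ₁ v₁]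
      fun x ↦ log (gaussianPDFReal μ₁ v₁ x) - log (gaussianPDFReal μ₂ v₂ x) := by
  have hP := gaussianReal_absolutelyContinuous μ₁ hv₁
  filter_upwards [llr_ae_eq_sub_of_absolutelyContinuous
    (hP.trans (gaussianReal_absolutelyContinuous' μ₂ hv₂)) hP
    (gaussianReal_absolutelyContinuous μ₂ hv₂), hP.ae_le (rnDeriv_gaussianReal μ₁ v₁),
    hP.ae_le (rnDeriv_gaussianReal μ₂ v₂)] with x hx h₁ h₂
  rw [hx, h₁, h₂, toReal_gaussianPDF, toReal_gaussianPDF]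

lemma integral_sub_const_sq {P : Measure ℝ} [IsProbabilityMeasure P] (h : MemLp id 2 P) (c : ℝ) :
    ∫ x, (x - c) ^ 2 ∂P = Var[id; P] + (∫ x, x ∂P - c) ^ 2 := by
  have h_sub : MemLp (fun x ↦ id x - c) 2 P := h.sub (memLp_const c)
  rw [← variance_sub_const h.aestronglyMeasurable c, variance_eq_sub h_sub,
    integral_sub (h.integrable one_le_two) (integrable_const c)]
  simp

lemma integrable_sub_const_sq_gaussianReal (μ c : ℝ) (v : ℝ≥0) :
    Integrable (fun x ↦ (x - c) ^ 2) (gaussianReal μ v) :=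
  ((memLp_id_gaussianReal 2).sub (memLp_const c)).integrable_sq

section

variable {μ₁ μ₂ : ℝ} {v₁ v₂ : ℝ≥0}

lemma integrable_log_gaussianPDFReal (hv₂ : v₂ ≠ 0) :
    Integrable (fun x ↦ log (gaussianPDFReal μ₂ v₂ x)) (gaussianReal μ₁ v₁) := by
  simp_rw [log_gaussianPDFReal μ₂ hv₂]
  exact (integrable_const _).sub ((integrable_sub_const_sq_gaussianReal μ₁ μ₂ v₁).div_const _)

lemma integral_log_gaussianPDFReal (hv₂ : v₂ ≠ 0) :
    ∫ x, log (gaussianPDFReal μ₂ v₂ x) ∂gaussianReal μ₁ v₁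
      = -log (2 * π * v₂) / 2 - (v₁ + (μ₁ - μ₂) ^ 2) / (2 * v₂) := by
  simp_rw [log_gaussianPDFReal μ₂ hv₂]
  rw [integral_sub (integrable_const _)
      ((integrable_sub_const_sq_gaussianReal μ₁ μ₂ v₁).div_const _),
    integral_const, integral_div, integral_sub_const_sq (memLp_id_gaussianReal 2),
    variance_id_gaussianReal, integral_id_gaussianReal]
  simp

end

theorem stmt_6 (μ₁ μ₂ : ℝ) (v₁ v₂ : ℝ≥0) (hv₁ : 0 < v₁) (hv₂ : 0 < v₂) :
    klDiv (gaussianReal μ₁ v₁) (gaussianReal μ₂ v₂) =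
      ENNReal.ofReal ((1 / 2) * Real.log ((v₂ : ℝ) / (v₁ : ℝ))
        + (1 / 2) * ((v₁ : ℝ) / (v₂ : ℝ) - 1)
        + (μ₁ - μ₂) ^ 2 / (2 * (v₂ : ℝ))) := by
  have hv₁' : v₁ ≠ 0 := hv₁.ne'
  have hv₂' : v₂ ≠ 0 := hv₂.ne'
  have hPQ : gaussianReal μ₁ v₁ ≪ gaussianReal μ₂ v₂ :=
    (gaussianReal_absolutelyContinuous μ₁ hv₁').trans (gaussianReal_absolutelyContinuous' μ₂ hv₂')
  rw [klDiv_eq_ofReal_integral hPQ (llr_gaussianReal hv₁' hv₂')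
      ((integrable_log_gaussianPDFReal hv₁').sub (integrable_log_gaussianPDFReal hv₂')),
    integral_sub (integrable_log_gaussianPDFReal hv₁') (integrable_log_gaussianPDFReal hv₂'),
    integral_log_gaussianPDFReal hv₁', integral_log_gaussianPDFReal hv₂']
  have hv₁R : (v₁ : ℝ) ≠ 0 := NNReal.coe_ne_zero.mpr hv₁'
  have hv₂R : (v₂ : ℝ) ≠ 0 := NNReal.coe_ne_zero.mpr hv₂'
  have h2π : (2 * π : ℝ) ≠ 0 := by positivity
  rw [log_div hv₂R hv₁R, log_mul h2π hv₁R, log_mul h2π hv₂R]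
  congr 1
  field_simp
  ring
end

section
/- Let f₀ and f₁ be probability densities on ℝ^L with D(f₁‖f₀) < ∞. Then lim_{β→0⁺} D(β·f₁ + (1−β)·f₀ ‖ f₀)/β = 0. -/
open MeasureTheory ProbabilityTheory
open scoped ENNReal NNReal

/-! With `r = dP/dQ`, the mixture `βP + (1 - β)Q` has density `βr + 1 - β` with respect to `Q`,
so its divergence from `Q` is `∫ klFun (βr + 1 - β) dQ`, where `klFun x = x log x + 1 - x`.
Convexity of `klFun` together with `klFun 1 = 0` gives `0 ≤ klFun (βr + 1 - β) / β ≤ klFun r`,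
and `klFun r` is `Q`-integrable exactly when `D(P‖Q) < ∞`. Since `klFun' 1 = log 1 = 0`, the
integrand tends to `0` pointwise as `β → 0⁺`, and dominated convergence concludes. -/

open Real Set Filter Topology
open InformationTheory hiding klDiv

lemma klFun_mul_add_one_sub_le {β x : ℝ} (hβ₀ : 0 ≤ β) (hβ₁ : β ≤ 1) (hx : 0 ≤ x) :
    klFun (β * x + (1 - β)) ≤ β * klFun x := by
  simpa [klFun_one] using
    convexOn_klFun.2 (mem_Ici.2 hx) (mem_Ici.2 zero_le_one) hβ₀ (sub_nonneg.2 hβ₁) (by ring)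

lemma tendsto_klFun_mul_add_one_sub_div (x : ℝ) :
    Tendsto (fun β => klFun (β * x + (1 - β)) / β) (𝓝[>] 0) (𝓝 0) := by
  have hline : HasDerivAt (fun β : ℝ => β * x + (1 - β)) (x - 1) 0 :=
    (((hasDerivAt_id' 0).mul_const x).fun_add
      ((hasDerivAt_const 0 1).fun_sub (hasDerivAt_id' 0))).congr_deriv (by ring)
  have hderiv : HasDerivAt (fun β => klFun (β * x + (1 - β))) 0 0 := by
    have := (hasDerivAt_klFun one_ne_zero).comp_of_eq 0 hline (by simp)
    rwa [log_one, zero_mul] at this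
  refine hderiv.tendsto_slope_zero_right.congr fun β => ?_
  simp [klFun_one, div_eq_inv_mul]

section Mixture

variable {α : Type*} [MeasurableSpace α] {P Q : Measure α} {β : ℝ}

lemma toReal_rnDeriv_mixture [IsFiniteMeasure P] [IsFiniteMeasure Q] (hβ₀ : 0 ≤ β)
    (hβ₁ : β ≤ 1) :
    ∀ᵐ x ∂Q, ((β.toNNReal • P + (1 - β).toNNReal • Q).rnDeriv Q x).toReal
      = β * (P.rnDeriv Q x).toReal + (1 - β) := by
  filter_upwards [Measure.rnDeriv_add' (β.toNNReal • P) ((1 - β).toNNReal • Q) Q,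
    Measure.rnDeriv_smul_left' P Q β.toNNReal, Measure.rnDeriv_smul_left' Q Q (1 - β).toNNReal,
    Measure.rnDeriv_self Q, Measure.rnDeriv_lt_top P Q] with x hadd hP hQ hself hlt
  rw [hadd, Pi.add_apply, hP, hQ, Pi.smul_apply, Pi.smul_apply, hself, ENNReal.smul_def,
    ENNReal.smul_def, smul_eq_mul, smul_eq_mul, mul_one,
    ENNReal.toReal_add (ENNReal.mul_ne_top ENNReal.coe_ne_top hlt.ne) ENNReal.coe_ne_top,
    ENNReal.toReal_mul]
  simp [hβ₀, sub_nonneg.2 hβ₁]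

theorem tendsto_toReal_klDiv_mixture_div [IsFiniteMeasure P] [IsFiniteMeasure Q]
    (hPQ : InformationTheory.klDiv P Q ≠ ∞) :
    Tendsto (fun β : ℝ => (InformationTheory.klDiv
        (β.toNNReal • P + (1 - β).toNNReal • Q) Q).toReal / β) (𝓝[>] 0) (𝓝 0) := by
  obtain ⟨hac, hllr⟩ := klDiv_ne_top_iff.1 hPQ
  set r := fun x => (P.rnDeriv Q x).toReal
  have hunit : ∀ᶠ β in 𝓝[>] (0 : ℝ), β ∈ Ioc 0 1 := Ioc_mem_nhdsGT one_pos
  have hlim : Tendsto (fun β => ∫ x, klFun (β * r x + (1 - β)) / β ∂Q) (𝓝[>] 0) (𝓝 0) := by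
    simpa using tendsto_integral_filter_of_dominated_convergence (fun x => klFun (r x))
      (Eventually.of_forall fun β => by fun_prop)
      (by
        filter_upwards [hunit] with β ⟨hβ₀, hβ₁⟩
        refine ae_of_all _ fun x => ?_
        rw [Real.norm_of_nonneg (div_nonneg (klFun_nonneg (by positivity)) hβ₀.le),
          div_le_iff₀' hβ₀]
        exact klFun_mul_add_one_sub_le hβ₀.le hβ₁ ENNReal.toReal_nonneg)
      ((integrable_klFun_rnDeriv_iff hac).2 hllr)
      (ae_of_all _ fun x => tendsto_klFun_mul_add_one_sub_div (r x))
  refine hlim.congr' ?_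
  filter_upwards [hunit] with β ⟨hβ₀, hβ₁⟩
  have hmix : β.toNNReal • P + (1 - β).toNNReal • Q ≪ Q :=
    (hac.smul_left _).add_left (Measure.AbsolutelyContinuous.rfl.smul_left _)
  rw [toReal_klDiv_eq_integral_klFun hmix, integral_div]
  congr 1
  refine integral_congr_ae ?_
  filter_upwards [toReal_rnDeriv_mixture (P := P) (Q := Q) hβ₀.le hβ₁] with x hx
  rw [hx]

end Mixture

section Probability

variable {α : Type*} [MeasurableSpace α]

/- Mathlib's `InformationTheory.klDiv` adds the correction `ν univ - μ univ`, which vanishes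
between probability measures. -/
lemma klDiv_eq_informationTheory_klDiv (μ ν : Measure α) [IsProbabilityMeasure μ]
    [IsProbabilityMeasure ν] : klDiv μ ν = InformationTheory.klDiv μ ν := by
  rw [klDiv, InformationTheory.klDiv_def]
  simp only [probReal_univ, add_sub_cancel_right]
  rfl

lemma isProbabilityMeasure_withDensity_ofReal {μ : Measure α} {f : α → ℝ} (hf : ∀ x, 0 ≤ f x)
    (hf_int : ∫ x, f x ∂μ = 1) :
    IsProbabilityMeasure (μ.withDensity fun x => ENNReal.ofReal (f x)) := by
  constructor
  rw [withDensity_apply _ MeasurableSet.univ, Measure.restrict_univ,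
    ← ofReal_integral_eq_lintegral_ofReal (.of_integral_ne_zero (by simp [hf_int]))
      (ae_of_all _ hf), hf_int, ENNReal.ofReal_one]

lemma isProbabilityMeasure_mixture (P Q : Measure α) [IsProbabilityMeasure P]
    [IsProbabilityMeasure Q] {β : ℝ} (hβ₀ : 0 ≤ β) (hβ₁ : β ≤ 1) :
    IsProbabilityMeasure (β.toNNReal • P + (1 - β).toNNReal • Q) := by
  constructor
  simp [← ENNReal.coe_add, ← Real.toNNReal_add hβ₀ (sub_nonneg.2 hβ₁)]

lemma withDensity_ofReal_mixture {μ : Measure α} {f g : α → ℝ} (hf : Measurable f)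
    (hf₀ : ∀ x, 0 ≤ f x) (hg₀ : ∀ x, 0 ≤ g x) {β : ℝ} (hβ₀ : 0 ≤ β) (hβ₁ : β ≤ 1) :
    μ.withDensity (fun x => ENNReal.ofReal (β * f x + (1 - β) * g x))
      = β.toNNReal • μ.withDensity (fun x => ENNReal.ofReal (f x))
        + (1 - β).toNNReal • μ.withDensity (fun x => ENNReal.ofReal (g x)) := by
  rw [ENNReal.smul_def, ENNReal.smul_def, ← withDensity_smul' _ _ ENNReal.coe_ne_top,
    ← withDensity_smul' _ _ ENNReal.coe_ne_top,
    ← withDensity_add_left (hf.ennreal_ofReal.const_smul _)]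
  congr 1
  funext x
  rw [ENNReal.ofReal_add (mul_nonneg hβ₀ (hf₀ x)) (mul_nonneg (sub_nonneg.2 hβ₁) (hg₀ x)),
    ENNReal.ofReal_mul hβ₀, ENNReal.ofReal_mul (sub_nonneg.2 hβ₁)]
  rfl

end Probability

theorem stmt_8_general (L : ℕ) (f₀ f₁ : (Fin L → ℝ) → ℝ)
    (hf₁m : Measurable f₁)
    (hf₀ : ∀ x, 0 ≤ f₀ x) (hf₁ : ∀ x, 0 ≤ f₁ x)
    (hf₀1 : ∫ x, f₀ x = 1) (hf₁1 : ∫ x, f₁ x = 1)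
    (hfin : klDiv (volume.withDensity fun x => ENNReal.ofReal (f₁ x))
        (volume.withDensity fun x => ENNReal.ofReal (f₀ x)) < ⊤) :
    Filter.Tendsto
      (fun β : ℝ =>
        (klDiv (volume.withDensity fun x => ENNReal.ofReal (β * f₁ x + (1 - β) * f₀ x))
            (volume.withDensity fun x => ENNReal.ofReal (f₀ x))).toReal / β)
      (nhdsWithin 0 (Set.Ioi 0)) (nhds 0) := by
  set P := volume.withDensity fun x => ENNReal.ofReal (f₁ x)
  set Q := volume.withDensity fun x => ENNReal.ofReal (f₀ x)
  have := isProbabilityMeasure_withDensity_ofReal hf₁ hf₁1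
  have := isProbabilityMeasure_withDensity_ofReal hf₀ hf₀1
  rw [klDiv_eq_informationTheory_klDiv] at hfin
  refine (tendsto_toReal_klDiv_mixture_div hfin.ne).congr' ?_
  filter_upwards [Ioc_mem_nhdsGT one_pos] with β ⟨hβ₀, hβ₁⟩
  have := isProbabilityMeasure_mixture P Q hβ₀.le hβ₁
  rw [withDensity_ofReal_mixture hf₁m hf₁ hf₀ hβ₀.le hβ₁, klDiv_eq_informationTheory_klDiv]

theorem stmt_8 (L : ℕ) (f₀ f₁ : (Fin L → ℝ) → ℝ)
    (hf₀m : Measurable f₀) (hf₁m : Measurable f₁)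
    (hf₀ : ∀ x, 0 ≤ f₀ x) (hf₁ : ∀ x, 0 ≤ f₁ x)
    (hf₀1 : ∫ x, f₀ x = 1) (hf₁1 : ∫ x, f₁ x = 1)
    (hfin : klDiv (volume.withDensity fun x => ENNReal.ofReal (f₁ x))
        (volume.withDensity fun x => ENNReal.ofReal (f₀ x)) < ⊤) :
    Filter.Tendsto
      (fun β : ℝ =>
        (klDiv (volume.withDensity fun x => ENNReal.ofReal (β * f₁ x + (1 - β) * f₀ x))
            (volume.withDensity fun x => ENNReal.ofReal (f₀ x))).toReal / β)
      (nhdsWithin 0 (Set.Ioi 0)) (nhds 0) :=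
  stmt_8_general L f₀ f₁ hf₁m hf₀ hf₁ hf₀1 hf₁1 hfin
end
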